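/- There is a constant C > 0 such that for all η, σ ∈ ℝ², |(η+σ)/⟨η+σ⟩ − σ/⟨σ⟩| ≥ C |η| / ( max(⟨η+σ⟩, ⟨σ⟩) · min(⟨η+σ⟩, ⟨σ⟩)² ). -/

import Mathlib

open MeasureTheory Real
open scoped FourierTransform ENNReal

noncomputable section

abbrev E2 := EuclideanSpace ℝ (Fin 2)

/-- Japanese bracket `⟨x⟩ = (1+|x|²)^{1/2}`. -/
def jap (x : E2) : ℝ := Real.sqrt (1 + ‖x‖^2)

/-!
Write `A = ⟨a⟩`, `B = ⟨b⟩`. Expanding the norms gives the exact identity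
`(AB)² ‖a/A - b/B‖² = AB ‖a - b‖² - (AB + 1)(A - B)²`, and `(A - B)(A + B) = ‖a‖² - ‖b‖²`
bounds the loss by `(A - B)² ≤ ‖a - b‖² (‖a‖ + ‖b‖)² / (A + B)²`.
Hence `(AB)² ‖a/A - b/B‖² ≥ ‖a - b‖² (A + B)² / (AB + 1 + ‖a‖‖b‖)²`, the algebra resting on
`(AB + 1 - ‖a‖‖b‖)(AB + 1 + ‖a‖‖b‖) = (A + B)²`. Finally `AB + 1 + ‖a‖‖b‖ ≤ 3AB`,
`A + B ≥ max A B` and `AB = max A B * min A B`.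
-/

lemma jap_sq (x : E2) : jap x ^ 2 = 1 + ‖x‖ ^ 2 := Real.sq_sqrt (by positivity)

lemma one_le_jap (x : E2) : 1 ≤ jap x := by
  rw [jap, Real.one_le_sqrt]
  nlinarith [sq_nonneg ‖x‖]

lemma sq_sub_mul_sq_add_le {E : Type*} [SeminormedAddCommGroup E] {a b : E} {A B : ℝ}
    (hA : A ^ 2 = 1 + ‖a‖ ^ 2) (hB : B ^ 2 = 1 + ‖b‖ ^ 2) :
    (A - B) ^ 2 * (A + B) ^ 2 ≤ ‖a - b‖ ^ 2 * (‖a‖ + ‖b‖) ^ 2 := by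
  have hdiff : (A - B) * (A + B) = (‖a‖ - ‖b‖) * (‖a‖ + ‖b‖) := by
    linear_combination hA - hB
  rw [← mul_pow, ← mul_pow, hdiff, mul_pow, mul_pow]
  refine mul_le_mul_of_nonneg_right (sq_le_sq.mpr ?_) (sq_nonneg _)
  rw [abs_norm]
  exact abs_norm_sub_norm_le a b

lemma bracket_gap_mul_sq_eq {A B s t : ℝ} (hs : s ^ 2 = A ^ 2 - 1) (ht : t ^ 2 = B ^ 2 - 1) :
    (A * B * (A + B) ^ 2 - (A * B + 1) * (s + t) ^ 2) * (A * B + 1 + s * t) ^ 2 =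
      (A + B) ^ 4 := by
  have hconj : (A * B + 1 - s * t) * (A * B + 1 + s * t) = (A + B) ^ 2 := by
    linear_combination (-t ^ 2) * hs - (A ^ 2 - 1) * ht
  have hgap : A * B * (A + B) ^ 2 - (A * B + 1) * (s + t) ^ 2 =
      2 * (A * B + 1) * (A * B + 1 - s * t) - (A + B) ^ 2 := by
    linear_combination (-(A * B + 1)) * hs - (A * B + 1) * ht
  rw [hgap]
  linear_combination (2 * (A * B + 1) * (A * B + 1 + s * t) + (A + B) ^ 2) * hconj

lemma add_pow_four_le_bracket_gap {A B s t : ℝ} (hA : 1 ≤ A) (hB : 1 ≤ B) (hs0 : 0 ≤ s)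
    (ht0 : 0 ≤ t) (hs : s ^ 2 = A ^ 2 - 1) (ht : t ^ 2 = B ^ 2 - 1) :
    (A + B) ^ 4 ≤ 9 * (A * B) ^ 2 * (A * B * (A + B) ^ 2 - (A * B + 1) * (s + t) ^ 2) := by
  have hid := bracket_gap_mul_sq_eq hs ht
  have hgap_pos : 0 < A * B * (A + B) ^ 2 - (A * B + 1) * (s + t) ^ 2 :=
    pos_of_mul_pos_left (hid ▸ by positivity) (sq_nonneg (A * B + 1 + s * t))
  have hsA : s ≤ A := by nlinarith
  have htB : t ≤ B := by nlinarith
  have hAB : 1 ≤ A * B := one_le_mul_of_one_le_of_one_le hA hB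
  have hst : s * t ≤ A * B := mul_le_mul hsA htB ht0 (by linarith)
  have hsum : (A * B + 1 + s * t) ^ 2 ≤ 9 * (A * B) ^ 2 := by
    nlinarith [mul_nonneg hs0 ht0]
  rw [← hid, mul_comm]
  gcongr

section Bracket

variable {E : Type*} [NormedAddCommGroup E] [InnerProductSpace ℝ E]
  {a b : E} {A B : ℝ}

lemma mul_sq_mul_norm_inv_smul_sub_inv_smul_sq (hA : A ^ 2 = 1 + ‖a‖ ^ 2)
    (hB : B ^ 2 = 1 + ‖b‖ ^ 2) (hA0 : A ≠ 0) (hB0 : B ≠ 0) :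
    (A * B) ^ 2 * ‖A⁻¹ • a - B⁻¹ • b‖ ^ 2 = A * B * ‖a - b‖ ^ 2 - (A * B + 1) * (A - B) ^ 2 := by
  rw [norm_sub_sq_real, norm_sub_sq_real, norm_smul, norm_smul, real_inner_smul_left,
    real_inner_smul_right]
  simp only [norm_inv, Real.norm_eq_abs, mul_pow, inv_pow, sq_abs]
  field_simp
  linear_combination (A * B - B ^ 2) * hA + (A * B - A ^ 2) * hB

lemma add_mul_norm_sub_le (hA : A ^ 2 = 1 + ‖a‖ ^ 2) (hB : B ^ 2 = 1 + ‖b‖ ^ 2)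
    (hA1 : 1 ≤ A) (hB1 : 1 ≤ B) :
    (A + B) * ‖a - b‖ ≤ 3 * (A * B) ^ 2 * ‖A⁻¹ • a - B⁻¹ • b‖ := by
  have hid := mul_sq_mul_norm_inv_smul_sub_inv_smul_sq hA hB (by positivity) (by positivity)
  have hloss := sq_sub_mul_sq_add_le hA hB
  have hgap := add_pow_four_le_bracket_gap hA1 hB1 (norm_nonneg a) (norm_nonneg b)
    (by linarith) (by linarith)
  have hsq : ((A + B) * ‖a - b‖) ^ 2 * (A + B) ^ 2 ≤
      (3 * (A * B) ^ 2 * ‖A⁻¹ • a - B⁻¹ • b‖) ^ 2 * (A + B) ^ 2 := by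
    calc ((A + B) * ‖a - b‖) ^ 2 * (A + B) ^ 2 = (A + B) ^ 4 * ‖a - b‖ ^ 2 := by ring
      _ ≤ 9 * (A * B) ^ 2 * (A * B * (A + B) ^ 2 - (A * B + 1) * (‖a‖ + ‖b‖) ^ 2)
            * ‖a - b‖ ^ 2 := by gcongr
      _ = 9 * (A * B) ^ 2 * (A * B * (A + B) ^ 2 * ‖a - b‖ ^ 2
            - (A * B + 1) * (‖a - b‖ ^ 2 * (‖a‖ + ‖b‖) ^ 2)) := by ring
      _ ≤ 9 * (A * B) ^ 2 * (A * B * (A + B) ^ 2 * ‖a - b‖ ^ 2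
            - (A * B + 1) * ((A - B) ^ 2 * (A + B) ^ 2)) := by gcongr
      _ = 9 * (A * B) ^ 2 * ((A * B) ^ 2 * ‖A⁻¹ • a - B⁻¹ • b‖ ^ 2) * (A + B) ^ 2 := by
            rw [hid]; ring
      _ = (3 * (A * B) ^ 2 * ‖A⁻¹ • a - B⁻¹ • b‖) ^ 2 * (A + B) ^ 2 := by ring
  exact pow_le_pow_iff_left₀ (by positivity) (by positivity) two_ne_zero |>.mp
    (le_of_mul_le_mul_right hsq (by positivity))

end Bracket

theorem stmt2 : ∃ C > (0:ℝ), ∀ η σ : E2,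
    ‖(jap (η + σ))⁻¹ • (η + σ) - (jap σ)⁻¹ • σ‖ ≥
      C * ‖η‖ / (max (jap (η + σ)) (jap σ) * (min (jap (η + σ)) (jap σ))^2) := by
  refine ⟨1 / 3, by norm_num, fun η σ => ?_⟩
  have hA := one_le_jap (η + σ)
  have hB := one_le_jap σ
  have key := add_mul_norm_sub_le (jap_sq (η + σ)) (jap_sq σ) hA hB
  rw [add_sub_cancel_right, ← max_mul_min (jap (η + σ)) (jap σ)] at key
  set M := max (jap (η + σ)) (jap σ)
  set m := min (jap (η + σ)) (jap σ)
  have hM : M ≤ jap (η + σ) + jap σ := max_le_add_of_nonneg (by linarith) (by linarith)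
  have hm : 0 < m := lt_min (by linarith) (by linarith)
  have hM0 : 0 < M := by positivity
  rw [ge_iff_le, div_le_iff₀ (by positivity)]
  refine le_of_mul_le_mul_left ?_ hM0
  nlinarith [mul_le_mul_of_nonneg_right hM (norm_nonneg η)]

end
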